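/- arXiv:2502.14484 — 2 statements merged into one kernel-verified Lean document; each statement's English description precedes it below -/
import Mathlib

section
/- Let O ∈ ℝ², let ℓ be a line with O ∉ ℓ, let θ ∈ ℝ be not an integer multiple of π, let ℓ' be the image of ℓ under rotation by θ about O, let P ∈ ℓ, and let P' be the image of P under rotation by θ about O. Let O_ℓ and O_{ℓ'} be the reflections of O across ℓ and across ℓ' (these are distinct points), and let d be the line through O_ℓ and O_{ℓ'}. Then the line through P and P' meets the parabola {X ∈ ℝ² : dist(X, O) = dist(X, d)} in exactly one point; that is, the line through P and P' is tangent to the parabola with focus O and directrix d. -/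
/-!
Rotation about `O` maps the reflection of `O` across `ℓ` to its reflection across `ℓ'`, so the
directrix is the line through `Q := O_ℓ` and its rotate `Q'`. As `P` lies on the perpendicular
bisector of `OQ`, write `P = O + q/2 + μ q^⊥` with `q = Q - O`. For `X = P + t (P' - P)` one finds
`|X - O|² |Q' - Q|² - ((X - Q) × (Q' - Q))² = |q|⁴ L(t)² / 4` with
`L(t) = 2 (1 - cos θ) t - (1 - cos θ) - 2 μ sin θ`. The left side vanishes exactly on the
parabola, and `L` has nonzero slope, so exactly one `t` works.
-/

open Real

noncomputable section

abbrev Pt := EuclideanSpace ℝ (Fin 2)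

def pt (x y : ℝ) : Pt := (WithLp.equiv 2 _).symm ![x, y]

/-- The affine line through two points `A` and `B`. -/
def lineThrough (A B : Pt) : Set Pt := {P | ∃ t : ℝ, P = A + t • (B - A)}

/-- Counterclockwise rotation by angle `θ` about the point `c`. -/
def rotAbout (θ : ℝ) (c p : Pt) : Pt :=
  pt (c 0 + Real.cos θ * (p 0 - c 0) - Real.sin θ * (p 1 - c 1))
     (c 1 + Real.sin θ * (p 0 - c 0) + Real.cos θ * (p 1 - c 1))

/-- Euclidean dot product of two vectors of ℝ². -/
def dot (u v : Pt) : ℝ := u 0 * v 0 + u 1 * v 1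

/-- `X'` is the reflection of `X` across the line `m`. -/
def IsReflection (m : Set Pt) (X X' : Pt) : Prop :=
  midpoint ℝ X X' ∈ m ∧ ∀ A ∈ m, ∀ B ∈ m, dot (X' - X) (B - A) = 0

lemma Pt.ext_coord {X Y : Pt} (h0 : X 0 = Y 0) (h1 : X 1 = Y 1) : X = Y := by
  ext i; fin_cases i <;> assumption

lemma dist_sq_eq_dot (X Y : Pt) : dist X Y ^ 2 = dot (X - Y) (X - Y) := by
  rw [EuclideanSpace.dist_eq, Real.sq_sqrt (by positivity), Fin.sum_univ_two]
  simp [dot, Real.dist_eq, sq]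

lemma dot_self_pos {u : Pt} (hu : u ≠ 0) : 0 < dot u u := by
  by_contra! h
  refine hu (Pt.ext_coord ?_ ?_) <;> simp only [dot] at h <;> simp <;> nlinarith

def cross (u v : Pt) : ℝ := u 0 * v 1 - u 1 * v 0

lemma infDist_lineThrough_sq_mul {C D : Pt} (hCD : C ≠ D) (X : Pt) :
    Metric.infDist X (lineThrough C D) ^ 2 * dot (D - C) (D - C) = cross (X - C) (D - C) ^ 2 := by
  set u := D - C
  have hN : 0 < dot u u := dot_self_pos (sub_ne_zero.2 hCD.symm)
  obtain ⟨k, hk⟩ : ∃ k, k * dot u u = dot (X - C) u := ⟨_, div_mul_cancel₀ _ hN.ne'⟩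
  have hpyth (t : ℝ) :
      dist X (C + t • u) ^ 2 = dist X (C + k • u) ^ 2 + (t - k) ^ 2 * dot u u := by
    simp only [dist_sq_eq_dot, dot, PiLp.sub_apply, PiLp.add_apply, PiLp.smul_apply,
      smul_eq_mul] at hk ⊢
    linear_combination (2 * (t - k)) * hk
  have hfoot : Metric.infDist X (lineThrough C D) = dist X (C + k • u) := by
    refine le_antisymm (Metric.infDist_le_dist_of_mem ⟨k, rfl⟩)
      ((Metric.le_infDist (⟨C, 0, by simp⟩ : (lineThrough C D).Nonempty)).2 ?_)
    rintro _ ⟨t, rfl⟩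
    refine (pow_le_pow_iff_left₀ dist_nonneg dist_nonneg two_ne_zero).1 ?_
    rw [hpyth t]
    nlinarith [sq_nonneg (t - k)]
  rw [hfoot, dist_sq_eq_dot]
  simp only [dot, cross, PiLp.sub_apply, PiLp.add_apply, PiLp.smul_apply, smul_eq_mul] at hk ⊢
  linear_combination (k * (u 0 * u 0 + u 1 * u 1) - ((X 0 - C 0) * u 0 + (X 1 - C 1) * u 1)) * hk

lemma dist_eq_infDist_lineThrough_iff {C D : Pt} (hCD : C ≠ D) (X Y : Pt) :
    dist X Y = Metric.infDist X (lineThrough C D) ↔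
      dist X Y ^ 2 * dot (D - C) (D - C) = cross (X - C) (D - C) ^ 2 := by
  rw [← infDist_lineThrough_sq_mul hCD, mul_left_inj' (dot_self_pos (sub_ne_zero.2 hCD.symm)).ne',
    sq_eq_sq₀ dist_nonneg Metric.infDist_nonneg]

@[simp] lemma rotAbout_apply_zero (θ : ℝ) (c p : Pt) :
    rotAbout θ c p 0 = c 0 + cos θ * (p 0 - c 0) - sin θ * (p 1 - c 1) := rfl

@[simp] lemma rotAbout_apply_one (θ : ℝ) (c p : Pt) :
    rotAbout θ c p 1 = c 1 + sin θ * (p 0 - c 0) + cos θ * (p 1 - c 1) := rfl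

@[simp] lemma rotAbout_self (θ : ℝ) (c : Pt) : rotAbout θ c c = c :=
  Pt.ext_coord (by simp) (by simp)

lemma rotAbout_lineMap (θ : ℝ) (c A B : Pt) (t : ℝ) :
    rotAbout θ c (A + t • (B - A)) = rotAbout θ c A + t • (rotAbout θ c B - rotAbout θ c A) :=
  Pt.ext_coord (by simp; ring) (by simp; ring)

lemma rotAbout_midpoint (θ : ℝ) (c X Y : Pt) :
    rotAbout θ c (midpoint ℝ X Y) = midpoint ℝ (rotAbout θ c X) (rotAbout θ c Y) := by
  simp only [midpoint_eq_smul_add]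
  exact Pt.ext_coord (by simp; ring) (by simp; ring)

lemma dot_rotAbout_sub (θ : ℝ) (c X Y A B : Pt) :
    dot (rotAbout θ c X - rotAbout θ c Y) (rotAbout θ c A - rotAbout θ c B) =
      dot (X - Y) (A - B) := by
  simp only [dot, PiLp.sub_apply, rotAbout_apply_zero, rotAbout_apply_one]
  linear_combination ((X 0 - Y 0) * (A 0 - B 0) + (X 1 - Y 1) * (A 1 - B 1)) * sin_sq_add_cos_sq θ

lemma rotAbout_injective (θ : ℝ) (c : Pt) : Function.Injective (rotAbout θ c) := by
  intro X Y h
  by_contra hXY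
  have := dot_rotAbout_sub θ c X Y X Y
  rw [h, sub_self] at this
  exact (dot_self_pos (sub_ne_zero.2 hXY)).ne (by simpa [dot] using this)

lemma rotAbout_image_lineThrough (θ : ℝ) (c A B : Pt) :
    rotAbout θ c '' lineThrough A B = lineThrough (rotAbout θ c A) (rotAbout θ c B) := by
  ext X
  constructor
  · rintro ⟨_, ⟨t, rfl⟩, rfl⟩
    exact ⟨t, rotAbout_lineMap θ c A B t⟩
  · rintro ⟨t, rfl⟩
    exact ⟨_, ⟨t, rfl⟩, rotAbout_lineMap θ c A B t⟩

lemma IsReflection.rotAbout {m : Set Pt} {X Y : Pt} (h : IsReflection m X Y) (θ : ℝ) (c : Pt) :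
    IsReflection (rotAbout θ c '' m) (rotAbout θ c X) (rotAbout θ c Y) := by
  refine ⟨⟨_, h.1, rotAbout_midpoint θ c X Y⟩, ?_⟩
  rintro _ ⟨A, hA, rfl⟩ _ ⟨B, hB, rfl⟩
  rw [dot_rotAbout_sub]
  exact h.2 A hA B hB

lemma IsReflection.eq_of_lineThrough {A B X Y Z : Pt} (hAB : A ≠ B)
    (hY : IsReflection (lineThrough A B) X Y) (hZ : IsReflection (lineThrough A B) X Z) :
    Y = Z := by
  have hA : A ∈ lineThrough A B := ⟨0, by simp⟩
  have hB : B ∈ lineThrough A B := ⟨1, by simp⟩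
  obtain ⟨⟨s, hs⟩, hYperp⟩ := hY
  obtain ⟨⟨t, ht⟩, hZperp⟩ := hZ
  have hN := dot_self_pos (sub_ne_zero.2 hAB.symm)
  have hYperp := hYperp A hA B hB
  have hZperp := hZperp A hA B hB
  have hs0 := congrArg (· 0) hs
  have hs1 := congrArg (· 1) hs
  have ht0 := congrArg (· 0) ht
  have ht1 := congrArg (· 1) ht
  simp only [midpoint_eq_smul_add, invOf_eq_inv, dot, PiLp.smul_apply, PiLp.add_apply,
    PiLp.sub_apply, smul_eq_mul] at hs0 hs1 ht0 ht1 hYperp hZperp hN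
  obtain rfl : s = t := by
    have : (s - t) * ((B 0 - A 0) * (B 0 - A 0) + (B 1 - A 1) * (B 1 - A 1)) = 0 := by
      linear_combination (hYperp - hZperp - 2 * (B 0 - A 0) * (hs0 - ht0)
        - 2 * (B 1 - A 1) * (hs1 - ht1)) / 2
    exact sub_eq_zero.1 ((mul_eq_zero.1 this).resolve_right hN.ne')
  exact Pt.ext_coord (by linear_combination 2 * (hs0 - ht0)) (by linear_combination 2 * (hs1 - ht1))

def parabola (F : Pt) (d : Set Pt) : Set Pt := {X | dist X F = Metric.infDist X d}

lemma mem_parabola {F X : Pt} {d : Set Pt} : X ∈ parabola F d ↔ dist X F = Metric.infDist X d :=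
  Iff.rfl

lemma existsUnique_mem_lineThrough_of_iff {A B : Pt} {p : Pt → Prop} {a b : ℝ} (ha : a ≠ 0)
    (h : ∀ t : ℝ, p (A + t • (B - A)) ↔ a * t + b = 0) :
    ∃! X, X ∈ lineThrough A B ∧ p X := by
  refine ⟨A + (-b / a) • (B - A), ⟨⟨_, rfl⟩, (h _).2 (by field_simp; ring)⟩, ?_⟩
  rintro _ ⟨⟨t, rfl⟩, hX⟩
  have ht : t = -b / a := by
    rw [eq_div_iff ha]
    linarith [(h t).1 hX]
  rw [ht]

lemma exists_smul_perp_of_dot_eq_zero {u w : Pt} (hu : u ≠ 0) (h : dot u w = 0) :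
    ∃ μ : ℝ, w 0 = -(μ * u 1) ∧ w 1 = μ * u 0 := by
  have hN : u 0 ^ 2 + u 1 ^ 2 ≠ 0 := by simpa only [dot, ← sq] using (dot_self_pos hu).ne'
  simp only [dot] at h
  refine ⟨cross u w / (u 0 ^ 2 + u 1 ^ 2), ?_, ?_⟩ <;> simp only [cross] <;> field_simp
  · linear_combination u 0 * h
  · linear_combination u 1 * h

lemma dot_rotAbout_sub_self (θ : ℝ) (c p : Pt) :
    dot (rotAbout θ c p - p) (rotAbout θ c p - p) = 2 * (1 - cos θ) * dot (p - c) (p - c) := by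
  simp only [dot, PiLp.sub_apply, rotAbout_apply_zero, rotAbout_apply_one]
  linear_combination ((p 0 - c 0) ^ 2 + (p 1 - c 1) ^ 2) * sin_sq_add_cos_sq θ

theorem existsUnique_lineThrough_rotAbout_inter_parabola {O Q P : Pt} {θ : ℝ} (hθ : cos θ ≠ 1)
    (hQ : Q ≠ O) (hP : dot (Q - O) (P - midpoint ℝ O Q) = 0) :
    ∃! X, X ∈ lineThrough P (rotAbout θ O P) ∧ X ∈ parabola O (lineThrough Q (rotAbout θ O Q)) := by
  have hq := dot_self_pos (sub_ne_zero.2 hQ)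
  have hc : 0 < 1 - cos θ := sub_pos.2 ((cos_le_one θ).lt_of_ne hθ)
  have hQQ' : Q ≠ rotAbout θ O Q := by
    intro h
    have := dot_rotAbout_sub_self θ O Q
    rw [← h, sub_self] at this
    exact (mul_pos (mul_pos two_pos hc) hq).ne (by simpa [dot] using this)
  obtain ⟨μ, hμ0, hμ1⟩ := exists_smul_perp_of_dot_eq_zero (sub_ne_zero.2 hQ) hP
  simp only [PiLp.sub_apply, midpoint_eq_smul_add, PiLp.smul_apply, PiLp.add_apply, smul_eq_mul,
    invOf_eq_inv] at hμ0 hμ1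
  have hP0 : P 0 = O 0 + (Q 0 - O 0) / 2 - μ * (Q 1 - O 1) := by linear_combination hμ0
  have hP1 : P 1 = O 1 + (Q 1 - O 1) / 2 + μ * (Q 0 - O 0) := by linear_combination hμ1
  refine existsUnique_mem_lineThrough_of_iff (a := 2 * (1 - cos θ))
    (b := -(1 - cos θ) - 2 * sin θ * μ) (by positivity) fun t => ?_
  rw [mem_parabola, dist_eq_infDist_lineThrough_iff hQQ', dist_sq_eq_dot, ← sub_eq_zero]
  simp only [dot, PiLp.sub_apply, ← sq] at hq
  convert_to ((Q 0 - O 0) ^ 2 + (Q 1 - O 1) ^ 2) ^ 2 *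
    (2 * (1 - cos θ) * t + (-(1 - cos θ) - 2 * sin θ * μ)) ^ 2 / 4 = 0 ↔ _ using 2
  · simp only [dot, cross, PiLp.sub_apply, PiLp.add_apply, PiLp.smul_apply, smul_eq_mul,
      rotAbout_apply_zero, rotAbout_apply_one]
    rw [hP0, hP1]
    linear_combination (((Q 0 - O 0) ^ 2 + (Q 1 - O 1) ^ 2) ^ 2 * t / 4 *
      ((3 + sin θ ^ 2 - 4 * cos θ + cos θ ^ 2) * t - 2 - 4 * sin θ * μ + 2 * cos θ)) *
      sin_sq_add_cos_sq θ
  · simp [hq.ne']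

theorem line_PP'_tangent_to_parabola
    (O A B : Pt) (hAB : A ≠ B) (hO : O ∉ lineThrough A B)
    (θ : ℝ) (hθ : ∀ n : ℤ, θ ≠ n * π)
    (P : Pt) (hP : P ∈ lineThrough A B)
    (Oℓ Oℓ' : Pt)
    (h1 : IsReflection (lineThrough A B) O Oℓ)
    (h2 : IsReflection (rotAbout θ O '' lineThrough A B) O Oℓ') :
    ∃! X : Pt, X ∈ lineThrough P (rotAbout θ O P) ∧
      dist X O = Metric.infDist X (lineThrough Oℓ Oℓ') := by
  have hcos : cos θ ≠ 1 := fun h => by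
    obtain ⟨n, hn⟩ := (cos_eq_one_iff θ).1 h
    exact hθ (2 * n) (by rw [← hn]; push_cast; ring)
  have hOℓ : Oℓ ≠ O := by
    rintro rfl
    exact hO (by simpa using h1.1)
  have hOℓ' : Oℓ' = rotAbout θ O Oℓ := by
    have h1' := h1.rotAbout θ O
    rw [rotAbout_self, rotAbout_image_lineThrough] at h1'
    rw [rotAbout_image_lineThrough] at h2
    exact h2.eq_of_lineThrough ((rotAbout_injective θ O).ne hAB) h1'
  subst hOℓ'
  exact existsUnique_lineThrough_rotAbout_inter_parabola hcos hOℓ (h1.2 _ h1.1 P hP)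
end
end

section
/- Let m ≥ 3 be an integer, r > 0, φ ∈ ℝ, and for i ∈ ℤ let P_i = r·(cos(2πi/m + φ), sin(2πi/m + φ)), the vertices of a regular m-gon centered at the origin O = (0,0). Let b and d be integers such that P_b, O and P_{b−d} are not collinear, and let 𝒞 be the circle through these three points. If Q ∈ 𝒞 and Q' is the image of Q under the counterclockwise rotation by 2πd/m about O, then the three points P_b, Q and Q' are collinear. -/
/- STATEMENT 10 (Configuration Construction Lemma): Let P_i be the vertices of a regular
m-gon of radius r centered at the origin O, let b, d be integers such that P_b, O and
P_{b-d} are not collinear, and let 𝒞 be the circle through these three points. If Q ∈ 𝒞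
and Q' is the rotate of Q by 2πd/m about O, then P_b, Q and Q' are collinear. -/

open Real

noncomputable section

/-!
Write `A = P_b`, `α = 2πd/m` and `R` for the rotation by `α` about `O`, so that
`P_{b-d} = R⁻¹ A`. The cross product `f Q = (Q - A) × (R Q - A)` equals
`sin α · |Q|² - ⟪w, Q⟫` for a vector `w` depending on `A` and `α` only. A circle through `O`
with centre `c` has equation `|Q|² = 2⟪c, Q⟫`; evaluating it at `A` and `R⁻¹ A` forces
`2 sin α · c = w`, so `f` is `sin α` times the equation of `𝒞` and vanishes on `𝒞`.
-/

@[simp]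
lemma pt_apply_zero (x y : ℝ) : pt x y 0 = x := rfl

@[simp]
lemma pt_apply_one (x y : ℝ) : pt x y 1 = y := rfl

lemma pt_zero_zero : pt 0 0 = 0 := by
  ext i; fin_cases i <;> rfl

lemma sq_add_sq_eq_norm_sq (p : Pt) : p 0 ^ 2 + p 1 ^ 2 = ‖p‖ ^ 2 := by
  simp [EuclideanSpace.norm_sq_eq, Fin.sum_univ_two]

lemma inner_eq_coords (p q : Pt) : inner ℝ p q = p 0 * q 0 + p 1 * q 1 := by
  simp [PiLp.inner_apply, Fin.sum_univ_two, mul_comm]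

lemma pt_polar_ne_zero {r : ℝ} (hr : r ≠ 0) (θ : ℝ) : pt (r * cos θ) (r * sin θ) ≠ 0 := by
  intro h
  have h2 := sq_add_sq_eq_norm_sq (pt (r * cos θ) (r * sin θ))
  simp only [pt_apply_zero, pt_apply_one] at h2
  rw [h, norm_zero] at h2
  exact pow_ne_zero 2 hr (by linear_combination h2 - r ^ 2 * sin_sq_add_cos_sq θ)

lemma rotAbout_zero (θ : ℝ) (p : Pt) :
    rotAbout θ 0 p = pt (cos θ * p 0 - sin θ * p 1) (sin θ * p 0 + cos θ * p 1) := by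
  simp [rotAbout]

lemma rotAbout_zero_polar (α r θ : ℝ) :
    rotAbout α 0 (pt (r * cos θ) (r * sin θ)) = pt (r * cos (θ + α)) (r * sin (θ + α)) := by
  rw [rotAbout_zero, cos_add, sin_add]
  simp only [pt_apply_zero, pt_apply_one]
  congr 1 <;> ring

lemma eq_smul_of_cross_eq_zero {u w : Pt} (hu : u ≠ 0) (h : u 0 * w 1 - u 1 * w 0 = 0) :
    w = (inner ℝ w u / ‖u‖ ^ 2) • u := by
  have hu2 : u 0 ^ 2 + u 1 ^ 2 ≠ 0 := by
    rw [sq_add_sq_eq_norm_sq]; positivity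
  rw [inner_eq_coords, ← sq_add_sq_eq_norm_sq]
  ext i
  fin_cases i
  all_goals
    simp only [Fin.zero_eta, Fin.mk_one, Fin.isValue, PiLp.smul_apply, smul_eq_mul]
    rw [div_mul_eq_mul_div, eq_div_iff hu2]
  · linear_combination -u 1 * h
  · linear_combination u 0 * h

lemma collinear_of_cross_eq_zero (A B C : Pt)
    (h : (B 0 - A 0) * (C 1 - A 1) - (B 1 - A 1) * (C 0 - A 0) = 0) :
    Collinear ℝ ({A, B, C} : Set Pt) := by
  by_cases hBA : B = A
  · simpa [hBA] using collinear_pair ℝ A C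
  have hC : C ∈ line[ℝ, A, B] := by
    have := eq_smul_of_cross_eq_zero (sub_ne_zero.mpr hBA) (w := C - A) (by simpa using h)
    convert AffineMap.lineMap_mem_affineSpan_pair
      (inner ℝ (C - A) (B - A) / ‖B - A‖ ^ 2) A B using 1
    rw [AffineMap.lineMap_apply_module', ← this, sub_add_cancel]
  have := collinear_insert_of_mem_affineSpan_pair hC
  rwa [Set.insert_comm, Set.pair_comm] at this

lemma norm_sq_eq_two_inner_of_mem_sphere {E : Type*} [NormedAddCommGroup E]
    [InnerProductSpace ℝ E] {c q : E} {ρ : ℝ} (h0 : (0 : E) ∈ Metric.sphere c ρ)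
    (hq : q ∈ Metric.sphere c ρ) : ‖q‖ ^ 2 = 2 * inner ℝ q c := by
  rw [mem_sphere_iff_norm] at h0 hq
  have h := norm_sub_sq_real q c
  rw [hq, ← h0, zero_sub, norm_neg] at h
  linarith

lemma sq_add_sq_eq_of_mem_sphere {c q : Pt} {ρ : ℝ} (h0 : (0 : Pt) ∈ Metric.sphere c ρ)
    (hq : q ∈ Metric.sphere c ρ) : q 0 ^ 2 + q 1 ^ 2 = 2 * (q 0 * c 0 + q 1 * c 1) := by
  rw [sq_add_sq_eq_norm_sq, ← inner_eq_coords]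
  exact norm_sq_eq_two_inner_of_mem_sphere h0 hq

lemma center_of_mem_sphere_rotAbout {A c : Pt} {ρ α : ℝ} (hA0 : A ≠ 0)
    (h0 : (0 : Pt) ∈ Metric.sphere c ρ) (hA : A ∈ Metric.sphere c ρ)
    (hB : rotAbout (-α) 0 A ∈ Metric.sphere c ρ) :
    2 * sin α * c 0 = sin α * A 0 + (1 - cos α) * A 1 ∧
      2 * sin α * c 1 = sin α * A 1 - (1 - cos α) * A 0 := by
  have eA := sq_add_sq_eq_of_mem_sphere h0 hA
  have eB := sq_add_sq_eq_of_mem_sphere h0 hB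
  simp only [rotAbout_zero, pt_apply_zero, pt_apply_one, cos_neg, sin_neg] at eB
  have hr : A 0 ^ 2 + A 1 ^ 2 ≠ 0 := by
    rw [sq_add_sq_eq_norm_sq]; positivity
  have pyth := sin_sq_add_cos_sq α
  -- Cramer's rule for `⟪c, A⟫ = ⟪c, R⁻¹ A⟫ = |A|² / 2`, a system of determinant `sin α · |A|²`,
  -- multiplied out so that `sin α = 0` needs no separate treatment
  constructor <;> apply mul_right_cancel₀ hr
  · linear_combination (cos α * A 1 - sin α * A 0) * eA - A 1 * eB
      + A 1 * (A 0 ^ 2 + A 1 ^ 2) * pyth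
  · linear_combination (-sin α * A 1 - cos α * A 0) * eA + A 0 * eB
      - A 0 * (A 0 ^ 2 + A 1 ^ 2) * pyth

theorem collinear_rotAbout_of_mem_sphere {A Q c : Pt} {ρ α : ℝ} (hA0 : A ≠ 0)
    (h0 : (0 : Pt) ∈ Metric.sphere c ρ) (hA : A ∈ Metric.sphere c ρ)
    (hB : rotAbout (-α) 0 A ∈ Metric.sphere c ρ) (hQ : Q ∈ Metric.sphere c ρ) :
    Collinear ℝ ({A, Q, rotAbout α 0 Q} : Set Pt) := by
  obtain ⟨hc0, hc1⟩ := center_of_mem_sphere_rotAbout hA0 h0 hA hB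
  have eQ := sq_add_sq_eq_of_mem_sphere h0 hQ
  apply collinear_of_cross_eq_zero
  simp only [rotAbout_zero, pt_apply_zero, pt_apply_one]
  linear_combination sin α * eQ + Q 0 * hc0 + Q 1 * hc1

theorem configuration_construction_lemma_general
    (m : ℤ) (r : ℝ) (hr : 0 < r) (φ : ℝ)
    (P : ℤ → Pt)
    (hP : ∀ i : ℤ, P i =
      pt (r * Real.cos (2 * π * i / m + φ)) (r * Real.sin (2 * π * i / m + φ)))
    (b d : ℤ)
    (ctr : Pt) (rad : ℝ)
    (h1 : P b ∈ Metric.sphere ctr rad)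
    (h2 : pt 0 0 ∈ Metric.sphere ctr rad)
    (h3 : P (b - d) ∈ Metric.sphere ctr rad)
    (Q : Pt) (hQ : Q ∈ Metric.sphere ctr rad) :
    Collinear ℝ ({P b, Q, rotAbout (2 * π * d / m) (pt 0 0) Q} : Set Pt) := by
  have hPb : P b ≠ 0 := hP b ▸ pt_polar_ne_zero hr.ne' _
  have hPbd : P (b - d) = rotAbout (-(2 * π * d / m)) 0 (P b) := by
    rw [hP, hP, rotAbout_zero_polar]
    congr 3 <;> push_cast <;> ring
  rw [pt_zero_zero] at h2 ⊢
  exact collinear_rotAbout_of_mem_sphere hPb h2 h1 (hPbd ▸ h3) hQ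

theorem configuration_construction_lemma
    (m : ℤ) (hm : 3 ≤ m) (r : ℝ) (hr : 0 < r) (φ : ℝ)
    (P : ℤ → Pt)
    (hP : ∀ i : ℤ, P i =
      pt (r * Real.cos (2 * π * i / m + φ)) (r * Real.sin (2 * π * i / m + φ)))
    (b d : ℤ)
    (hncol : ¬ Collinear ℝ ({P b, pt 0 0, P (b - d)} : Set Pt))
    (ctr : Pt) (rad : ℝ)
    (h1 : P b ∈ Metric.sphere ctr rad)
    (h2 : pt 0 0 ∈ Metric.sphere ctr rad)
    (h3 : P (b - d) ∈ Metric.sphere ctr rad)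
    (Q : Pt) (hQ : Q ∈ Metric.sphere ctr rad) :
    Collinear ℝ ({P b, Q, rotAbout (2 * π * d / m) (pt 0 0) Q} : Set Pt) :=
  configuration_construction_lemma_general m r hr φ P hP b d ctr rad h1 h2 h3 Q hQ
end
end
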